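/- Let R be a commutative integral domain and h an entropy function of flows over R which is not identically zero. Then for every flow (M,φ) over R, P_h(M,φ) ⊆ 𝔚(M,φ); in particular, if N is a φ-invariant submodule of M with h(N, φ|_N) = 0, then every x ∈ N is annihilated by p(φ) for some nonzero polynomial p ∈ R[t]. -/
import Mathlib


open DirectSum

/-- An invariant of algebraic flows over `R`: a function assigning to every left
`R`-module `M` and every `R`-linear endomorphism `φ` of `M` a value in `[0,∞]`. -/
abbrev FlowInvariant (R : Type) [Ring R] : Type 1 :=
  ∀ (M : Type) [AddCommGroup M] [Module R M], (M →ₗ[R] M) → ENNReal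

/-- The direct sum of a family of endomorphisms, acting componentwise on `⨁ j, M j`. -/
noncomputable def dsMap (R : Type) [Ring R] {J : Type} {M : J → Type}
    [∀ j, AddCommGroup (M j)] [∀ j, Module R (M j)]
    (φ : ∀ j, M j →ₗ[R] M j) : (⨁ j, M j) →ₗ[R] ⨁ j, M j :=
  letI := Classical.decEq J
  DirectSum.toModule R J (⨁ j, M j) fun j => (DirectSum.lof R J M j).comp (φ j)

/-- `h` is an entropy function of algebraic flows over `R`: (A1) it vanishes on zero
flows and is invariant under conjugation; (A2) for every `φ`-invariant submodule `N` of
`M`, `h (M,φ)` vanishes iff `h` vanishes on the restriction of `φ` to `N` and on the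
endomorphism induced by `φ` on `M ⧸ N`; (A3) `h` vanishes on a direct sum of flows iff
it vanishes on every summand. -/
def IsFlowEntropyFunction (R : Type) [Ring R] (h : FlowInvariant R) : Prop :=
  (∀ (M : Type) [AddCommGroup M] [Module R M] (φ : M →ₗ[R] M),
      Subsingleton M → h M φ = 0) ∧
  (∀ (M : Type) [AddCommGroup M] [Module R M] (N : Type) [AddCommGroup N] [Module R N]
      (φ : M →ₗ[R] M) (ψ : N →ₗ[R] N) (σ : M ≃ₗ[R] N),
      (∀ x : M, σ (φ x) = ψ (σ x)) → h M φ = h N ψ) ∧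
  (∀ (M : Type) [AddCommGroup M] [Module R M] (φ : M →ₗ[R] M) (N : Submodule R M)
      (hN : ∀ x ∈ N, φ x ∈ N),
      h M φ = 0 ↔
        h ↥N (φ.restrict hN) = 0 ∧
        h (M ⧸ N) (Submodule.mapQ N N φ (fun x hx => hN x hx)) = 0) ∧
  (∀ (J : Type) (M : J → Type) [∀ j, AddCommGroup (M j)] [∀ j, Module R (M j)]
      (φ : ∀ j, M j →ₗ[R] M j),
      h (⨁ j, M j) (dsMap R φ) = 0 ↔ ∀ j, h (M j) (φ j) = 0)

/-- Axiom (A0): `h` vanishes on every zero endomorphism and on every identity. -/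
def FlowA0 (R : Type) [Ring R] (h : FlowInvariant R) : Prop :=
  ∀ (M : Type) [AddCommGroup M] [Module R M],
    h M (0 : M →ₗ[R] M) = 0 ∧ h M (LinearMap.id : M →ₗ[R] M) = 0

/-- Axiom (A4*), the logarithmic law: `h (M, φ^n) = n * h (M, φ)` for every `n ≥ 1`. -/
def FlowA4Star (R : Type) [Ring R] (h : FlowInvariant R) : Prop :=
  ∀ (M : Type) [AddCommGroup M] [Module R M] (φ : M →ₗ[R] M) (n : ℕ), 1 ≤ n →
    h M (φ ^ n) = (n : ENNReal) * h M φ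

/-- The Pinsker radical of a flow `(M, φ)` with respect to `h`: the sum of all
`φ`-invariant submodules on which the restriction of `φ` has zero entropy. -/
def FlowPinsker (R : Type) [Ring R] (h : FlowInvariant R)
    (M : Type) [AddCommGroup M] [Module R M] (φ : M →ₗ[R] M) : Submodule R M :=
  sSup {N : Submodule R M | ∃ hN : ∀ x ∈ N, φ x ∈ N, h ↥N (φ.restrict hN) = 0}


section Aux

variable {R : Type} [CommRing R]

/-- The Bernoulli shift on `R[t]`: multiplication by `X`. -/
noncomputable def shiftMap (R : Type) [CommRing R] : Polynomial R →ₗ[R] Polynomial R :=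
  LinearMap.mulLeft R Polynomial.X

lemma dsMap_lof (R' : Type) [Ring R'] {J : Type} {M : J → Type} [∀ j, AddCommGroup (M j)]
    [∀ j, Module R' (M j)] (φ : ∀ j, M j →ₗ[R'] M j) (j : J) (x : M j) :
    letI := Classical.decEq J
    dsMap R' φ (DirectSum.lof R' J M j x) = DirectSum.lof R' J M j (φ j x) := by
  letI := Classical.decEq J
  exact DirectSum.toModule_lof R' j x

variable {M : Type} [AddCommGroup M] [Module R M]

/-- Evaluation of polynomials in `φ` at a point `x`. -/
noncomputable def evalAt (φ : M →ₗ[R] M) (x : M) : Polynomial R →ₗ[R] M where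
  toFun p := Polynomial.aeval φ p x
  map_add' p q := by simp
  map_smul' r p := by simp

@[simp] lemma evalAt_apply (φ : M →ₗ[R] M) (x : M) (p : Polynomial R) :
    evalAt φ x p = Polynomial.aeval φ p x := rfl

lemma evalAt_shift (φ : M →ₗ[R] M) (x : M) (p : Polynomial R) :
    evalAt φ x (shiftMap R p) = φ (evalAt φ x p) := by
  simp [shiftMap, map_mul, Module.End.mul_apply]

lemma restrict_pow_coe (φ : M →ₗ[R] M) {N : Submodule R M} (hN : ∀ x ∈ N, φ x ∈ N)
    (n : ℕ) (x : N) : (((φ.restrict hN) ^ n) x : M) = (φ ^ n) (x : M) := by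
  induction n generalizing x with
  | zero => simp
  | succ n ih =>
      rw [pow_succ, pow_succ, Module.End.mul_apply, Module.End.mul_apply, ih,
        LinearMap.restrict_coe_apply]

lemma aeval_restrict_coe (φ : M →ₗ[R] M) {N : Submodule R M} (hN : ∀ x ∈ N, φ x ∈ N)
    (p : Polynomial R) (x : N) :
    ((Polynomial.aeval (φ.restrict hN) p x : N) : M) = Polynomial.aeval φ p (x : M) := by
  induction p using Polynomial.induction_on' with
  | add p q hp hq => simp [map_add, LinearMap.add_apply, hp, hq]
  | monomial n r =>
      simp only [Polynomial.aeval_monomial, Module.End.mul_apply,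
        Module.algebraMap_end_apply, LinearMap.smul_apply, SetLike.val_smul]
      rw [restrict_pow_coe]

/-- Submodule of elements annihilated by some nonzero polynomial in `φ`. -/
noncomputable def polyTorsion [IsDomain R] (φ : M →ₗ[R] M) : Submodule R M where
  carrier := {x | ∃ p : Polynomial R, p ≠ 0 ∧ Polynomial.aeval φ p x = 0}
  zero_mem' := ⟨1, one_ne_zero, by simp⟩
  add_mem' := by
    rintro a b ⟨p, hp, hpa⟩ ⟨q, hq, hqb⟩
    refine ⟨p * q, mul_ne_zero hp hq, ?_⟩
    rw [map_add]
    have h1 : Polynomial.aeval φ (p * q) a = 0 := by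
      rw [mul_comm, map_mul, Module.End.mul_apply, hpa, map_zero]
    have h2 : Polynomial.aeval φ (p * q) b = 0 := by
      rw [map_mul, Module.End.mul_apply, hqb, map_zero]
    rw [h1, h2, add_zero]
  smul_mem' := by
    rintro r a ⟨p, hp, hpa⟩
    exact ⟨p, hp, by rw [map_smul, hpa, smul_zero]⟩

set_option maxHeartbeats 1000000 in
/-- Main lemma: if the Bernoulli shift has zero entropy, then `h` is identically zero. -/
lemma entropy_zero_of_shift (h : FlowInvariant R) (H : IsFlowEntropyFunction R h)
    (hs : h (Polynomial R) (shiftMap R) = 0) (M : Type) [AddCommGroup M] [Module R M]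
    (φ : M →ₗ[R] M) : h M φ = 0 := by
  letI := Classical.decEq M
  set D := ⨁ (_ : M), Polynomial R with hD
  let π : D →ₗ[R] M := DirectSum.toModule R M M (fun x => evalAt φ x)
  have hπlof : ∀ (x : M) (p : Polynomial R),
      π (DirectSum.lof R M (fun _ => Polynomial R) x p) = Polynomial.aeval φ p x := by
    intro x p
    show DirectSum.toModule R M M (fun x => evalAt φ x)
      (DirectSum.lof R M (fun _ => Polynomial R) x p) = _
    rw [DirectSum.toModule_lof]
    rfl
  have hsurj : Function.Surjective π := by
    intro x
    exact ⟨DirectSum.lof R M (fun _ => Polynomial R) x 1, by simp [hπlof]⟩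
  set Φ : D →ₗ[R] D := dsMap R (fun _ : M => shiftMap R) with hΦ
  have hΦlof : ∀ (x : M) (p : Polynomial R),
      Φ (DirectSum.lof R M (fun _ => Polynomial R) x p)
        = DirectSum.lof R M (fun _ => Polynomial R) x (shiftMap R p) := by
    intro x p
    rw [hΦ]
    exact dsMap_lof R (fun _ : M => shiftMap R) x p
  have hcomm : ∀ y : D, π (Φ y) = φ (π y) := by
    suffices hh : π ∘ₗ Φ = φ ∘ₗ π by
      intro y; exact DFunLike.congr_fun hh y
    refine DirectSum.linearMap_ext R fun x => ?_
    ext p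
    simp only [LinearMap.comp_apply]
    rw [hΦlof, hπlof, hπlof]
    exact evalAt_shift φ x _
  have hK : ∀ y ∈ LinearMap.ker π, Φ y ∈ LinearMap.ker π := by
    intro y hy
    simp only [LinearMap.mem_ker] at hy ⊢
    rw [hcomm, hy, map_zero]
  have hD0 : h D Φ = 0 :=
    (H.2.2.2 M (fun _ => Polynomial R) (fun _ => shiftMap R)).mpr (fun _ => hs)
  have hquot : h (D ⧸ LinearMap.ker π)
      (Submodule.mapQ (LinearMap.ker π) (LinearMap.ker π) Φ (fun y hy => hK y hy)) = 0 :=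
    ((H.2.2.1 D Φ (LinearMap.ker π) hK).mp hD0).2
  let f : (D ⧸ LinearMap.ker π) →ₗ[R] M := Submodule.liftQ (LinearMap.ker π) π le_rfl
  have hfinj : Function.Injective f := by
    rw [← LinearMap.ker_eq_bot]
    exact Submodule.ker_liftQ_eq_bot _ _ _ le_rfl
  have hfsurj : Function.Surjective f := by
    intro x
    obtain ⟨y, hy⟩ := hsurj x
    exact ⟨Submodule.Quotient.mk y, hy⟩
  let σ : (D ⧸ LinearMap.ker π) ≃ₗ[R] M := LinearEquiv.ofBijective f ⟨hfinj, hfsurj⟩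
  have hconj := H.2.1 (D ⧸ LinearMap.ker π) M
    (Submodule.mapQ (LinearMap.ker π) (LinearMap.ker π) Φ (fun y hy => hK y hy)) φ σ ?_
  · rw [← hconj]; exact hquot
  · intro q
    obtain ⟨y, rfl⟩ := Submodule.Quotient.mk_surjective _ q
    have h1 : σ (Submodule.Quotient.mk y) = π y := rfl
    have h2 : (Submodule.mapQ (LinearMap.ker π) (LinearMap.ker π) Φ (fun y hy => hK y hy)) (Submodule.Quotient.mk y)
        = Submodule.Quotient.mk (Φ y) := Submodule.mapQ_apply _ _ _ y
    rw [h2]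
    show π (Φ y) = φ (π y)
    exact hcomm y

/-- If `h` is not identically zero, every zero-entropy flow is pointwise algebraic. -/
lemma pointwise_of_zero_entropy [IsDomain R] (h : FlowInvariant R)
    (H : IsFlowEntropyFunction R h)
    (hnz : ¬ ∀ (M : Type) [AddCommGroup M] [Module R M] (φ : M →ₗ[R] M), h M φ = 0)
    (M : Type) [AddCommGroup M] [Module R M] (φ : M →ₗ[R] M) (hM : h M φ = 0)
    (x : M) : ∃ p : Polynomial R, p ≠ 0 ∧ Polynomial.aeval φ p x = 0 := by
  by_contra hc
  push_neg at hc
  have hinj : Function.Injective (evalAt φ x) := by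
    rw [← LinearMap.ker_eq_bot, LinearMap.ker_eq_bot']
    intro p hp
    by_contra hp0
    exact hc p hp0 hp
  set N := LinearMap.range (evalAt φ x) with hNdef
  have hNinv : ∀ y ∈ N, φ y ∈ N := by
    rintro y ⟨p, rfl⟩
    exact ⟨shiftMap R p, evalAt_shift φ x p⟩
  have hN0 : h ↥N (φ.restrict hNinv) = 0 := ((H.2.2.1 M φ N hNinv).mp hM).1
  let σ : Polynomial R ≃ₗ[R] N := LinearEquiv.ofInjective (evalAt φ x) hinj
  have hconj : h (Polynomial R) (shiftMap R) = h ↥N (φ.restrict hNinv) := by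
    refine H.2.1 (Polynomial R) ↥N (shiftMap R) (φ.restrict hNinv) σ ?_
    intro p
    apply Subtype.ext
    rw [LinearMap.restrict_coe_apply]
    show evalAt φ x (shiftMap R p) = φ (evalAt φ x p)
    exact evalAt_shift φ x p
  have hs : h (Polynomial R) (shiftMap R) = 0 := hconj.trans hN0
  exact hnz (fun M' _ _ φ' => entropy_zero_of_shift h H hs M' φ')

end Aux

/-- If `R` is an integral domain and `h` an entropy function of flows over `R` which is
not identically zero, then `P_h(M,φ) ⊆ 𝔚(M,φ)` for every flow: every element of the
Pinsker radical is annihilated by `p(φ)` for some nonzero polynomial `p ∈ R[t]`; in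
particular this holds for every element of any `φ`-invariant submodule `N` with
`h (N, φ|_N) = 0`. -/
theorem pinsker_le_pointwiseAlgebraic (R : Type) [CommRing R] [IsDomain R]
    (h : FlowInvariant R) (H : IsFlowEntropyFunction R h)
    (hnz : ¬ ∀ (M : Type) [AddCommGroup M] [Module R M] (φ : M →ₗ[R] M), h M φ = 0) :
    ∀ (M : Type) [AddCommGroup M] [Module R M] (φ : M →ₗ[R] M),
      (∀ x ∈ FlowPinsker R h M φ,
        ∃ p : Polynomial R, p ≠ 0 ∧ (Polynomial.aeval φ p) x = 0) ∧
      (∀ (N : Submodule R M) (hN : ∀ y ∈ N, φ y ∈ N), h ↥N (φ.restrict hN) = 0 →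
        ∀ x ∈ N, ∃ p : Polynomial R, p ≠ 0 ∧ (Polynomial.aeval φ p) x = 0) := by
  intro M _ _ φ
  have key : ∀ (N : Submodule R M) (hN : ∀ y ∈ N, φ y ∈ N), h ↥N (φ.restrict hN) = 0 →
      ∀ x ∈ N, ∃ p : Polynomial R, p ≠ 0 ∧ (Polynomial.aeval φ p) x = 0 := by
    intro N hN h0 x hx
    obtain ⟨p, hp, hpx⟩ := pointwise_of_zero_entropy h H hnz ↥N (φ.restrict hN) h0 ⟨x, hx⟩
    refine ⟨p, hp, ?_⟩
    have := aeval_restrict_coe φ hN p ⟨x, hx⟩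
    rw [hpx] at this
    exact this.symm
  refine ⟨?_, key⟩
  intro x hx
  have hle : FlowPinsker R h M φ ≤ polyTorsion φ := by
    apply sSup_le
    rintro N ⟨hN, h0⟩
    intro y hy
    exact key N hN h0 y hy
  exact hle hx
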